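/- Let C be a left R-module that is Tor-∏-orthogonal, i.e., Tor^R_i((C⁺)^I, C) = 0 for all i ≥ 1 and all sets I. Then Add_R(C) ⊆ PG_CF(R), i.e., every direct summand of a direct sum of copies of C is a projectively coresolved G_C-flat module. Conversely, if Add_R(C) ⊆ PG_CF(R), then C is Tor-∏-orthogonal. -/

import Mathlib

open CategoryTheory CategoryTheory.Limits

set_option autoImplicit false

universe u

variable {R : Type u} [CommRing R]

/-- A short exact sequence of `R`-modules encoded by two linear maps. -/
def IsSES {A B C : ModuleCat.{u} R} (f : A →ₗ[R] B) (g : B →ₗ[R] C) : Prop :=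
  Function.Injective f ∧ Function.Exact f g ∧ Function.Surjective g

/-- `Add_R(C)`: direct summands of direct sums of copies of `C`. -/
def AddClass (C : ModuleCat.{u} R) : ModuleCat.{u} R → Prop := fun M =>
  ∃ (ι : Type u) (s : M →ₗ[R] (ι →₀ C)) (p : (ι →₀ C) →ₗ[R] M), p ∘ₗ s = LinearMap.id

/-- `Prod_R(C)`: direct summands of direct products of copies of `C`. -/
def ProdClass (C : ModuleCat.{u} R) : ModuleCat.{u} R → Prop := fun M =>
  ∃ (ι : Type u) (s : M →ₗ[R] (ι → C)) (p : (ι → C) →ₗ[R] M), p ∘ₗ s = LinearMap.id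

/-- The character module `C⁺ = Hom_ℤ(C, ℚ/ℤ)` as an `R`-module. -/
noncomputable def charM (C : ModuleCat.{u} R) : ModuleCat.{u} R :=
  ModuleCat.of R (CharacterModule C)

/-- `C` is Tor-∏-orthogonal: `Tor^R_i((C⁺)^I, C) = 0` for all `i ≥ 1` and all sets `I`. -/
def TorProdOrthogonal (C : ModuleCat.{u} R) : Prop :=
  ∀ (I : Type u) (i : ℕ), 1 ≤ i →
    Limits.IsZero (((Tor (ModuleCat.{u} R) i).obj
      (ModuleCat.of R (I → CharacterModule C))).obj C)

/-- A totally acyclic complex `⋯ → P₁ → P₀ → A₀ → A₁ → ⋯` with the `Pᵢ` projective,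
the `Aⱼ` in `Add_R(C)`, which stays exact after `Y ⊗_R -` for `Y ∈ Prod_R(C⁺)`. -/
structure PGCFComplex (C : ModuleCat.{u} R) where
  P : ℕ → ModuleCat.{u} R
  A : ℕ → ModuleCat.{u} R
  projP : ∀ n, Module.Projective R (P n)
  memA : ∀ n, AddClass C (A n)
  dP : ∀ n, P (n + 1) →ₗ[R] P n
  mid : P 0 →ₗ[R] A 0
  dA : ∀ n, A n →ₗ[R] A (n + 1)
  exact_P : ∀ n, Function.Exact (dP (n + 1)) (dP n)
  exact_mid : Function.Exact (dP 0) mid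
  exact_A0 : Function.Exact mid (dA 0)
  exact_A : ∀ n, Function.Exact (dA n) (dA (n + 1))
  tensor_exact : ∀ Y : ModuleCat.{u} R, ProdClass (charM C) Y →
    (∀ n, Function.Exact (LinearMap.lTensor Y (dP (n + 1))) (LinearMap.lTensor Y (dP n))) ∧
    Function.Exact (LinearMap.lTensor Y (dP 0)) (LinearMap.lTensor Y mid) ∧
    Function.Exact (LinearMap.lTensor Y mid) (LinearMap.lTensor Y (dA 0)) ∧
    ∀ n, Function.Exact (LinearMap.lTensor Y (dA n)) (LinearMap.lTensor Y (dA (n + 1)))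

/-- `M` is projectively coresolved `G_C`-flat. -/
def IsPGCF (C M : ModuleCat.{u} R) : Prop :=
  ∃ X : PGCFComplex C, Nonempty (M ≃ₗ[R] ↥(LinearMap.range X.mid))

/-!
Over `ModuleCat R`, `Tor` may be computed from any projective resolution, so
`Tor_{i+1}(Y, M) = 0` says exactly that `Y ⊗ -` keeps a projective resolution of `M` exact in
degree `i + 1`. If `C` is Tor-∏-orthogonal, this vanishing passes from `(C⁺)^I` to its retracts
`Y ∈ Prod(C⁺)`, and from `C` to `M ∈ Add(C)`, because `Y ⊗ -` commutes with direct sums and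
`Tor` preserves retracts. Splicing a projective resolution `P → M` with `M → 0 → 0 → ⋯` then
gives a complex witnessing that `M` is PG_CF. Conversely, the projective half of a PG_CF complex
for `C` itself is a projective resolution of `C` that stays exact under `(C⁺)^I ⊗ -`.
-/

section

variable {S J Y A B K : Type*} [AddCommMonoid Y] [AddCommMonoid A] [AddCommMonoid B]
  [AddCommMonoid K]

lemma LinearMap.exact_zero_zero_of_subsingleton [Semiring S] [Module S A] [Module S B]
    [Module S K] [Subsingleton B] :
    Function.Exact (0 : A →ₗ[S] B) (0 : B →ₗ[S] K) :=
  fun _ => ⟨fun _ => ⟨0, Subsingleton.elim _ _⟩, fun _ => rfl⟩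

lemma Function.Exact.finsupp_mapRange [Semiring S] [Module S A] [Module S B] [Module S K]
    {f : A →ₗ[S] B} {g : B →ₗ[S] K} (h : Function.Exact f g) :
    Function.Exact (Finsupp.mapRange.linearMap (α := J) f) (Finsupp.mapRange.linearMap g) := by
  intro u
  change _ ↔ u ∈ Set.range (Finsupp.mapRange f f.map_zero)
  simp [Finsupp.range_mapRange, Finsupp.ext_iff, h _]

variable [CommSemiring S] [Module S Y] [Module S A] [Module S B] [Module S K]

lemma TensorProduct.finsuppRight_comp_lTensor_mapRange [DecidableEq J] (f : A →ₗ[S] B) :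
    (TensorProduct.finsuppRight S S Y B J).toLinearMap ∘ₗ
        (Finsupp.mapRange.linearMap f).lTensor Y =
      Finsupp.mapRange.linearMap (f.lTensor Y) ∘ₗ
        (TensorProduct.finsuppRight S S Y A J).toLinearMap := by
  ext y j a
  simp

lemma Function.Exact.lTensor_finsupp_mapRange
    {f : A →ₗ[S] B} {g : B →ₗ[S] K} (h : Function.Exact (f.lTensor Y) (g.lTensor Y)) :
    Function.Exact ((Finsupp.mapRange.linearMap (α := J) f).lTensor Y)
      ((Finsupp.mapRange.linearMap (α := J) g).lTensor Y) := by
  classical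
  exact (Function.Exact.iff_of_ladder_linearEquiv
    (TensorProduct.finsuppRight_comp_lTensor_mapRange f).symm
    (TensorProduct.finsuppRight_comp_lTensor_mapRange g).symm).1 h.finsupp_mapRange

end

structure LinearProjectiveResolution (M : ModuleCat.{u} R) where
  P : ℕ → ModuleCat.{u} R
  projective : ∀ n, Module.Projective R (P n)
  d : ∀ n, P (n + 1) →ₗ[R] P n
  ε : P 0 →ₗ[R] M
  exact_d : ∀ n, Function.Exact (d (n + 1)) (d n)
  exact_ε : Function.Exact (d 0) ε
  surjective_ε : Function.Surjective ε

namespace LinearProjectiveResolution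

variable {M : ModuleCat.{u} R}

noncomputable def ofProjectiveResolution (Q : ProjectiveResolution M) :
    LinearProjectiveResolution M where
  P := Q.complex.X
  projective n := (IsProjective.iff_projective _).2 (Q.projective n)
  d n := (Q.complex.d (n + 1) n).hom
  ε := (Q.π.f 0).hom
  exact_d n := (ShortComplex.ShortExact.moduleCat_exact_iff_function_exact _).1 (Q.exact_succ n)
  exact_ε := (ShortComplex.ShortExact.moduleCat_exact_iff_function_exact _).1
    ((ShortComplex.mk _ _ Q.complex_d_comp_π_f_zero).exact_of_g_is_cokernel
      Q.isColimitCokernelCofork)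
  surjective_ε := (ModuleCat.epi_iff_surjective _).1 inferInstance

instance : Nonempty (LinearProjectiveResolution M) :=
  ⟨ofProjectiveResolution (projectiveResolution M)⟩

variable (D : LinearProjectiveResolution M)

noncomputable def complex : ChainComplex (ModuleCat.{u} R) ℕ :=
  ChainComplex.of D.P (fun n => ModuleCat.ofHom (D.d n))
    (fun n => ModuleCat.hom_ext (LinearMap.ext (D.exact_d n).apply_apply_eq_zero))

lemma complex_d (n : ℕ) : D.complex.d (n + 1) n = ModuleCat.ofHom (D.d n) :=
  ChainComplex.of_d D.P (fun n => ModuleCat.ofHom (D.d n)) n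

instance (n : ℕ) : Projective (D.complex.X n) :=
  (IsProjective.iff_projective (D.P n)).1 (D.projective n)

lemma complex_exactAt_succ (n : ℕ) : D.complex.ExactAt (n + 1) := by
  rw [HomologicalComplex.exactAt_iff' _ (n + 2) (n + 1) n (by simp) (by simp),
    ShortComplex.ShortExact.moduleCat_exact_iff_function_exact]
  dsimp [HomologicalComplex.sc', HomologicalComplex.shortComplexFunctor']
  rw [D.complex_d, D.complex_d]
  exact D.exact_d n

noncomputable def toProjectiveResolution : ProjectiveResolution M where
  complex := D.complex
  π := (ChainComplex.toSingle₀Equiv _ _).symm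
    ⟨ModuleCat.ofHom D.ε, by
      rw [D.complex_d 0]
      exact ModuleCat.hom_ext (LinearMap.ext D.exact_ε.apply_apply_eq_zero)⟩
  quasiIso := ⟨fun n => by
    cases n with
    | zero =>
      rw [ChainComplex.quasiIsoAt₀_iff, ShortComplex.quasiIso_iff_of_zeros']
      · refine ⟨?_, (ModuleCat.epi_iff_surjective _).2 D.surjective_ε⟩
        rw [ShortComplex.ShortExact.moduleCat_exact_iff_function_exact]
        change Function.Exact (D.complex.d 1 0).hom D.ε
        rw [D.complex_d]
        exact D.exact_ε
      all_goals rfl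
    | succ n =>
      rw [quasiIsoAt_iff_exactAt' _ _ (ChainComplex.exactAt_succ_single_obj _ _)]
      exact D.complex_exactAt_succ n⟩

lemma isZero_tor_succ_iff (Y : ModuleCat.{u} R) (i : ℕ) :
    IsZero (((Tor (ModuleCat.{u} R) (i + 1)).obj Y).obj M) ↔
      Function.Exact ((D.d (i + 1)).lTensor Y) ((D.d i).lTensor Y) := by
  have e : ((Tor (ModuleCat.{u} R) (i + 1)).obj Y).obj M ≅
      (((MonoidalCategory.tensoringLeft _).obj Y).mapHomologicalComplex _).obj D.complex
        |>.homology (i + 1) :=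
    D.toProjectiveResolution.isoLeftDerivedObj
      ((MonoidalCategory.tensoringLeft (ModuleCat.{u} R)).obj Y) (i + 1)
  rw [e.isZero_iff, ← HomologicalComplex.exactAt_iff_isZero_homology,
    HomologicalComplex.exactAt_iff' _ (i + 2) (i + 1) i (by simp) (by simp),
    ShortComplex.ShortExact.moduleCat_exact_iff_function_exact]
  dsimp [HomologicalComplex.sc', HomologicalComplex.shortComplexFunctor']
  simp only [Functor.mapHomologicalComplex_obj_d, D.complex_d]
  rfl

noncomputable def finsupp (J : Type u) :
    LinearProjectiveResolution (ModuleCat.of R (J →₀ M)) where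
  P n := ModuleCat.of R (J →₀ D.P n)
  projective n := by
    classical
    have := D.projective n
    exact Module.Projective.of_equiv (finsuppLequivDFinsupp R).symm
  d n := Finsupp.mapRange.linearMap (D.d n)
  ε := Finsupp.mapRange.linearMap D.ε
  exact_d n := (D.exact_d n).finsupp_mapRange
  exact_ε := D.exact_ε.finsupp_mapRange
  surjective_ε := Finsupp.mapRange_surjective _ (map_zero _) D.surjective_ε

end LinearProjectiveResolution

lemma isZero_tor_finsupp {Y N : ModuleCat.{u} R}
    (h : ∀ i, IsZero (((Tor (ModuleCat.{u} R) (i + 1)).obj Y).obj N)) (J : Type u) (i : ℕ) :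
    IsZero (((Tor (ModuleCat.{u} R) (i + 1)).obj Y).obj (ModuleCat.of R (J →₀ N))) := by
  obtain ⟨D⟩ : Nonempty (LinearProjectiveResolution N) := inferInstance
  rw [(D.finsupp J).isZero_tor_succ_iff]
  exact ((D.isZero_tor_succ_iff Y i).1 (h i)).lTensor_finsupp_mapRange

def ModuleCat.retractOfLinear {M N : ModuleCat.{u} R} (s : M →ₗ[R] N) (p : N →ₗ[R] M)
    (h : p ∘ₗ s = LinearMap.id) : Retract M N :=
  ⟨ModuleCat.ofHom s, ModuleCat.ofHom p, ModuleCat.hom_ext h⟩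

lemma AddClass.isZero_tor {C M Y : ModuleCat.{u} R} (hM : AddClass C M)
    (hC : ∀ i, IsZero (((Tor (ModuleCat.{u} R) (i + 1)).obj Y).obj C)) (i : ℕ) :
    IsZero (((Tor (ModuleCat.{u} R) (i + 1)).obj Y).obj M) :=
  have ⟨J, s, p, h⟩ := hM
  IsZero.of_mono ((ModuleCat.retractOfLinear s p h).map ((Tor _ (i + 1)).obj Y)).i
    (isZero_tor_finsupp hC J i)

lemma ProdClass.isZero_tor {C M Y : ModuleCat.{u} R} (hY : ProdClass C Y) {n : ℕ}
    (hC : ∀ I : Type u, IsZero (((Tor (ModuleCat.{u} R) n).obj (ModuleCat.of R (I → C))).obj M)) :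
    IsZero (((Tor (ModuleCat.{u} R) n).obj Y).obj M) :=
  have ⟨I, s, p, h⟩ := hY
  IsZero.of_mono ((ModuleCat.retractOfLinear s p h).map ((Tor _ n).flip.obj M)).i (hC I)

lemma TorProdOrthogonal.isZero_tor {C M Y : ModuleCat.{u} R} (hC : TorProdOrthogonal C)
    (hM : AddClass C M) (hY : ProdClass (charM C) Y) (i : ℕ) :
    IsZero (((Tor (ModuleCat.{u} R) (i + 1)).obj Y).obj M) :=
  hY.isZero_tor fun I => hM.isZero_tor (fun j => hC I (j + 1) j.succ_pos) i

lemma addClass_of_subsingleton {C M : ModuleCat.{u} R} [Subsingleton M] : AddClass C M :=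
  ⟨PEmpty, 0, 0, LinearMap.ext fun _ => Subsingleton.elim _ _⟩

lemma addClass_self (C : ModuleCat.{u} R) : AddClass C C :=
  ⟨PUnit, Finsupp.lsingle PUnit.unit, Finsupp.lapply PUnit.unit, by ext; simp⟩

lemma isPGCF_of_isZero_tor {C M : ModuleCat.{u} R} (hM : AddClass C M)
    (hTor : ∀ Y, ProdClass (charM C) Y → ∀ i,
      IsZero (((Tor (ModuleCat.{u} R) (i + 1)).obj Y).obj M)) :
    IsPGCF C M := by
  obtain ⟨D⟩ : Nonempty (LinearProjectiveResolution M) := inferInstance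
  refine ⟨{
    P := D.P
    A := fun | 0 => M | _ + 1 => ModuleCat.of R PUnit
    projP := D.projective
    memA := fun | 0 => hM | _ + 1 => addClass_of_subsingleton
    dP := D.d
    mid := D.ε
    dA := fun _ => 0
    exact_P := D.exact_d
    exact_mid := D.exact_ε
    exact_A0 := (LinearMap.exact_zero_iff_surjective _ _).2 D.surjective_ε
    exact_A := fun _ => LinearMap.exact_zero_zero_of_subsingleton
    tensor_exact := fun Y hY => ⟨fun i => (D.isZero_tor_succ_iff Y i).1 (hTor Y hY i),
      lTensor_exact Y D.exact_ε D.surjective_ε, ?_, ?_⟩ }, ?_⟩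
  · rw [LinearMap.lTensor_zero, LinearMap.exact_zero_iff_surjective]
    exact LinearMap.lTensor_surjective Y D.surjective_ε
  · intro n
    simp only [LinearMap.lTensor_zero]
    exact LinearMap.exact_zero_zero_of_subsingleton
  · exact ⟨(LinearEquiv.ofTop _ (LinearMap.range_eq_top.2 D.surjective_ε)).symm⟩

noncomputable def PGCFComplex.resolution {C : ModuleCat.{u} R} (X : PGCFComplex C) :
    LinearProjectiveResolution (ModuleCat.of R (LinearMap.range X.mid)) where
  P := X.P
  projective := X.projP
  d := X.dP
  ε := X.mid.rangeRestrict
  exact_d := X.exact_P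
  exact_ε := by
    rw [LinearMap.exact_iff, LinearMap.ker_rangeRestrict, X.exact_mid.linearMap_ker_eq]
  surjective_ε := X.mid.surjective_rangeRestrict

lemma IsPGCF.isZero_tor {C M Y : ModuleCat.{u} R} (hM : IsPGCF C M)
    (hY : ProdClass (charM C) Y) (i : ℕ) :
    IsZero (((Tor (ModuleCat.{u} R) (i + 1)).obj Y).obj M) :=
  have ⟨X, ⟨e⟩⟩ := hM
  ((X.resolution.isZero_tor_succ_iff Y i).2 ((X.tensor_exact Y hY).1 i)).of_iso
    (((Tor _ (i + 1)).obj Y).mapIso e.toModuleIso)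

theorem statement8 (C : ModuleCat.{u} R) :
    (TorProdOrthogonal C → ∀ M : ModuleCat.{u} R, AddClass C M → IsPGCF C M) ∧
    ((∀ M : ModuleCat.{u} R, AddClass C M → IsPGCF C M) → TorProdOrthogonal C) := by
  refine ⟨fun hC M hM => isPGCF_of_isZero_tor hM fun Y hY => hC.isZero_tor hM hY,
    fun h I i hi => ?_⟩
  obtain ⟨k, rfl⟩ := Nat.exists_eq_add_of_le' hi
  exact (h C (addClass_self C)).isZero_tor ⟨I, LinearMap.id, LinearMap.id, rfl⟩ k
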